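/- The standard normal hazard function λ(x) = φ(x)/(1 − Φ(x)) is convex on ℝ. -/

import Mathlib

open MeasureTheory ProbabilityTheory

/-- Standard normal density. -/
noncomputable def phi (x : ℝ) : ℝ := (Real.sqrt (2 * Real.pi))⁻¹ * Real.exp (-x ^ 2 / 2)

/-- Standard normal CDF. -/
noncomputable def Phi (x : ℝ) : ℝ := ∫ s in Set.Iic x, phi s

/-- Standard normal hazard function (inverse Mills ratio). -/
noncomputable def lam (x : ℝ) : ℝ := phi x / (1 - Phi x)

/-- Mills-ratio-type function `φ(x)/Φ(x)`. -/
noncomputable def mills (x : ℝ) : ℝ := phi x / Phi x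

/-!
Differentiating `λ = φ / (1 - Φ)` with `φ' = -x φ` and `Φ' = φ` gives `λ' = λ (λ - x)` and
`λ'' = λ (2 λ² - 3 x λ + x² - 1)`. The quadratic factor is nonnegative as soon as `λ` lies above
its larger root `b(x) = (3x + √(x² + 8)) / 4`, which is Sampford's bound on the Mills ratio.
For `x ≤ -1` we have `b(x) ≤ 0 < λ(x)`. For `x > -1` the function `φ / b - (1 - Φ)` has
derivative `φ (b² - x b - b') / b² ≤ 0` and tends to `0` at `+∞`, so it is nonnegative,
which is the bound `b ≤ λ`.
-/

open Set Filter Topology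

lemma nonneg_of_hasDerivAt_nonpos_of_tendsto_zero {f f' : ℝ → ℝ} {a : ℝ}
    (hf : ∀ x ∈ Ioi a, HasDerivAt f (f' x) x) (hf' : ∀ x ∈ Ioi a, f' x ≤ 0)
    (hlim : Tendsto f atTop (𝓝 0)) {x : ℝ} (hx : x ∈ Ioi a) : 0 ≤ f x := by
  have hanti : AntitoneOn f (Ioi a) :=
    antitoneOn_of_hasDerivWithinAt_nonpos (convex_Ioi a)
      (fun y hy => (hf y hy).continuousAt.continuousWithinAt)
      (fun y hy => (hf y (interior_subset hy)).hasDerivWithinAt)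
      (fun y hy => hf' y (interior_subset hy))
  refine le_of_tendsto hlim ?_
  filter_upwards [eventually_ge_atTop x] with y hy
  exact hanti hx (lt_of_lt_of_le hx hy) hy

lemma phi_eq_gaussianPDFReal : phi = gaussianPDFReal 0 1 := by
  ext x
  simp [phi, gaussianPDFReal]

lemma phi_pos (x : ℝ) : 0 < phi x := by
  rw [phi_eq_gaussianPDFReal]
  exact gaussianPDFReal_pos _ _ _ one_ne_zero

lemma integrable_phi : Integrable phi := by
  rw [phi_eq_gaussianPDFReal]
  exact integrable_gaussianPDFReal _ _

lemma integral_phi : ∫ x, phi x = 1 := by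
  rw [phi_eq_gaussianPDFReal]
  exact integral_gaussianPDFReal_eq_one _ one_ne_zero

lemma continuous_phi : Continuous phi := by
  unfold phi
  fun_prop

lemma hasDerivAt_phi (x : ℝ) : HasDerivAt phi (-x * phi x) x := by
  have hexp : HasDerivAt (fun y : ℝ => -y ^ 2 / 2) (-(2 * x ^ 1) / 2) x :=
    ((hasDerivAt_pow 2 x).neg).div_const 2
  refine (hexp.exp.const_mul (Real.sqrt (2 * Real.pi))⁻¹).congr_deriv ?_
  simp only [phi]
  ring

lemma tendsto_phi_atTop : Tendsto phi atTop (𝓝 0) := by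
  have hexp : Tendsto (fun x : ℝ => Real.exp (-x ^ 2 / 2)) atTop (𝓝 0) :=
    Real.tendsto_exp_atBot.comp <| Tendsto.atBot_div_const two_pos <|
      tendsto_neg_atTop_atBot.comp (tendsto_pow_atTop two_ne_zero)
  have h := hexp.const_mul (Real.sqrt (2 * Real.pi))⁻¹
  rw [mul_zero] at h
  exact h

lemma hasDerivAt_Phi (x : ℝ) : HasDerivAt Phi (phi x) x := by
  have hPhi : Phi = fun y => Phi 0 + ∫ t in (0 : ℝ)..y, phi t := by
    ext y
    have := intervalIntegral.integral_Iic_sub_Iic integrable_phi.integrableOn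
      integrable_phi.integrableOn (a := 0) (b := y)
    simp only [Phi] at this ⊢
    linarith
  rw [hPhi]
  exact (intervalIntegral.integral_hasDerivAt_right integrable_phi.intervalIntegrable
    (continuous_phi.stronglyMeasurableAtFilter _ _) continuous_phi.continuousAt).const_add _

lemma one_sub_Phi_eq_integral_Ioi (x : ℝ) : 1 - Phi x = ∫ s in Ioi x, phi s := by
  have h := integral_add_compl (measurableSet_Iic (a := x)) integrable_phi
  rw [compl_Iic, integral_phi] at h
  rw [Phi]
  linarith

lemma one_sub_Phi_pos (x : ℝ) : 0 < 1 - Phi x := by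
  rw [one_sub_Phi_eq_integral_Ioi, setIntegral_pos_iff_support_of_nonneg_ae
    (.of_forall fun y => (phi_pos y).le) integrable_phi.integrableOn,
    Function.support_eq_univ (fun y => (phi_pos y).ne'), univ_inter, Real.volume_Ioi]
  exact ENNReal.zero_lt_top

lemma tendsto_one_sub_Phi_atTop : Tendsto (fun x => 1 - Phi x) atTop (𝓝 0) := by
  have h := tendsto_setIntegral_of_antitone (μ := volume) (fun r : ℝ => measurableSet_Ioi)
    (fun a b hab => Ioi_subset_Ioi hab) ⟨0, integrable_phi.integrableOn (s := Ioi 0)⟩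
  have hempty : ⋂ r : ℝ, Ioi r = ∅ := iInter_eq_empty_iff.mpr fun y => ⟨y, lt_irrefl y⟩
  rw [hempty, Measure.restrict_empty, integral_zero_measure] at h
  exact h.congr fun x => (one_sub_Phi_eq_integral_Ioi x).symm

lemma lam_pos (x : ℝ) : 0 < lam x := div_pos (phi_pos x) (one_sub_Phi_pos x)

lemma hasDerivAt_lam (x : ℝ) : HasDerivAt lam (lam x * (lam x - x)) x := by
  have hQ := (one_sub_Phi_pos x).ne'
  refine ((hasDerivAt_phi x).div ((hasDerivAt_Phi x).const_sub 1) hQ).congr_deriv ?_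
  simp only [lam]
  field_simp
  ring

lemma hasDerivAt_lam_mul_lam_sub (x : ℝ) :
    HasDerivAt (fun y => lam y * (lam y - y))
      (lam x * (2 * lam x ^ 2 - 3 * x * lam x + x ^ 2 - 1)) x := by
  refine ((hasDerivAt_lam x).mul ((hasDerivAt_lam x).sub (hasDerivAt_id x))).congr_deriv ?_
  simp only [Pi.sub_apply, id]
  ring

/-- The larger root of `l ↦ 2 l² - 3 x l + x² - 1`. -/
noncomputable def sampfordBound (x : ℝ) : ℝ := (3 * x + Real.sqrt (x ^ 2 + 8)) / 4

lemma sq_sqrt_sq_add_eight (x : ℝ) : Real.sqrt (x ^ 2 + 8) ^ 2 = x ^ 2 + 8 :=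
  Real.sq_sqrt (by positivity)

lemma sampfordBound_pos {x : ℝ} (hx : -1 < x) : 0 < sampfordBound x := by
  have hs := sq_sqrt_sq_add_eight x
  have hs0 := Real.sqrt_nonneg (x ^ 2 + 8)
  unfold sampfordBound
  nlinarith

lemma sampfordBound_nonpos {x : ℝ} (hx : x ≤ -1) : sampfordBound x ≤ 0 := by
  have hs := sq_sqrt_sq_add_eight x
  have hs0 := Real.sqrt_nonneg (x ^ 2 + 8)
  unfold sampfordBound
  nlinarith

lemma half_le_sampfordBound (x : ℝ) : x / 2 ≤ sampfordBound x := by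
  have hs := sq_sqrt_sq_add_eight x
  have hs0 := Real.sqrt_nonneg (x ^ 2 + 8)
  unfold sampfordBound
  nlinarith [sq_abs x, abs_nonneg x, le_abs_self x, neg_abs_le x]

lemma quadratic_nonneg_of_sampfordBound_le {x l : ℝ} (h : sampfordBound x ≤ l) :
    0 ≤ 2 * l ^ 2 - 3 * x * l + x ^ 2 - 1 := by
  have hs := sq_sqrt_sq_add_eight x
  have hs0 := Real.sqrt_nonneg (x ^ 2 + 8)
  unfold sampfordBound at h
  nlinarith

lemma hasDerivAt_sampfordBound (x : ℝ) :
    HasDerivAt sampfordBound ((3 + x / Real.sqrt (x ^ 2 + 8)) / 4) x := by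
  have hsq : HasDerivAt (fun y : ℝ => y ^ 2 + 8) (2 * x ^ 1) x := (hasDerivAt_pow 2 x).add_const 8
  have hsqrt := hsq.sqrt (by positivity)
  refine ((((hasDerivAt_id x).const_mul 3).add hsqrt).div_const 4).congr_deriv ?_
  field_simp

lemma sampfordBound_sq_le (x : ℝ) :
    sampfordBound x ^ 2 ≤ x * sampfordBound x + (3 + x / Real.sqrt (x ^ 2 + 8)) / 4 := by
  set s := Real.sqrt (x ^ 2 + 8)
  have hs2 : s ^ 2 = x ^ 2 + 8 := sq_sqrt_sq_add_eight x
  have hs : 0 < s := Real.sqrt_pos.mpr (by positivity)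
  -- after multiplying by `16 s` and using `s² = x² + 8`, the claim is this cubic inequality
  have hcubic : 2 * x * (x ^ 2 + 6) ≤ (2 * x ^ 2 + 4) * s := by
    rcases le_or_gt x 0 with hx | hx
    · nlinarith [mul_nonneg (by positivity : (0 : ℝ) ≤ 2 * x ^ 2 + 4) hs.le]
    · have hsum : 0 < (2 * x ^ 2 + 4) * s + 2 * x * (x ^ 2 + 6) := by positivity
      have hA2 : ((2 * x ^ 2 + 4) * s) ^ 2 = (2 * x ^ 2 + 4) ^ 2 * (x ^ 2 + 8) := by
        rw [mul_pow, hs2]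
      nlinarith
  unfold sampfordBound
  rw [← sub_nonneg]
  have hexpand : x * ((3 * x + s) / 4) + (3 + x / s) / 4 - ((3 * x + s) / 4) ^ 2
      = ((2 * x ^ 2 + 4) * s - 2 * x * (x ^ 2 + 6)) / (16 * s) := by
    field_simp
    nlinarith [hs2]
  rw [hexpand]
  exact div_nonneg (by linarith) (by positivity)

lemma hasDerivAt_phi_div_sampfordBound_sub {x : ℝ} (hx : -1 < x) :
    HasDerivAt (fun y => phi y / sampfordBound y - (1 - Phi y))
      (phi x * (sampfordBound x ^ 2 - x * sampfordBound x
        - (3 + x / Real.sqrt (x ^ 2 + 8)) / 4) / sampfordBound x ^ 2) x := by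
  have hb := (sampfordBound_pos hx).ne'
  refine (((hasDerivAt_phi x).div (hasDerivAt_sampfordBound x) hb).sub
    ((hasDerivAt_Phi x).const_sub 1)).congr_deriv ?_
  field_simp
  ring

lemma tendsto_phi_div_sampfordBound_sub :
    Tendsto (fun y => phi y / sampfordBound y - (1 - Phi y)) atTop (𝓝 0) := by
  have hb : Tendsto sampfordBound atTop atTop :=
    tendsto_atTop_mono half_le_sampfordBound (tendsto_id.atTop_div_const two_pos)
  simpa only [sub_zero] using (tendsto_phi_atTop.div_atTop hb).sub tendsto_one_sub_Phi_atTop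

lemma sampfordBound_le_lam (x : ℝ) : sampfordBound x ≤ lam x := by
  rcases le_or_gt x (-1) with hx | hx
  · exact (sampfordBound_nonpos hx).trans (lam_pos x).le
  have hgap : 0 ≤ phi x / sampfordBound x - (1 - Phi x) :=
    nonneg_of_hasDerivAt_nonpos_of_tendsto_zero
      (fun y hy => hasDerivAt_phi_div_sampfordBound_sub hy)
      (fun y _ => div_nonpos_of_nonpos_of_nonneg
        (mul_nonpos_of_nonneg_of_nonpos (phi_pos y).le
          (by linarith [sampfordBound_sq_le y])) (sq_nonneg _))
      tendsto_phi_div_sampfordBound_sub hx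
  rw [sub_nonneg, le_div_iff₀ (sampfordBound_pos hx)] at hgap
  rw [lam, le_div_iff₀ (one_sub_Phi_pos x)]
  linarith

/-- the standard normal hazard function `λ` is convex on `ℝ`. -/
theorem stmt_15 : ConvexOn ℝ Set.univ lam :=
  convexOn_of_hasDerivWithinAt2_nonneg convex_univ
    (fun x _ => (hasDerivAt_lam x).continuousAt.continuousWithinAt)
    (fun x _ => (hasDerivAt_lam x).hasDerivWithinAt)
    (fun x _ => (hasDerivAt_lam_mul_lam_sub x).hasDerivWithinAt)
    (fun x _ => mul_nonneg (lam_pos x).le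
      (quadratic_nonneg_of_sampfordBound_le (sampfordBound_le_lam x)))
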